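/- arXiv:0910.5535 — 7 statements merged into one kernel-verified Lean document; each statement's English description precedes it below -/
import Mathlib

section
/- Fix an integer d ≥ 3. Let z₁ > 0 solve z₁ = (e^{z₁} − 1)/(d − 1) and set α₁ = z₁ / (d·(1 − e^{−z₁})^{d−1}). If α > α₁, then the equation (z/(αd))^{1/(d−1)} + e^{−z} − 1 = 0 has a solution z > 0; that is, the largest non-negative solution z* of this equation satisfies z* > 0. -/
/-!
The function `f z = (z/(αd))^{1/(d-1)} + e^{-z} - 1` is continuous on `[0, ∞)` and positive at
`z = αd`. The condition `α > α₁` says exactly `z₁/(αd) < (1 - e^{-z₁})^{d-1}`, i.e. `f z₁ < 0`, so the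
intermediate value theorem gives a root between `z₁` and `αd`.
-/

open Real

theorem exists_pos_rpow_div_add_exp_neg_sub_one_eq_zero {a c z₀ : ℝ} (ha : 0 < a) (hc : 0 ≤ c)
    (hz₀ : 0 < z₀) (hneg : (z₀ / a) ^ c + exp (-z₀) < 1) :
    ∃ z : ℝ, 0 < z ∧ (z / a) ^ c + exp (-z) - 1 = 0 := by
  set f : ℝ → ℝ := fun z => (z / a) ^ c + exp (-z) - 1
  have hcont : Continuous f := by fun_prop (disch := exact Or.inr hc)
  have hf_a : 0 < f a := by
    have := exp_pos (-a)
    simp only [f, div_self ha.ne', one_rpow]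
    linarith
  have hroot : (0 : ℝ) ∈ Set.uIcc (f z₀) (f a) :=
    Set.mem_uIcc.mpr (Or.inl ⟨by simp only [f]; linarith, hf_a.le⟩)
  obtain ⟨z, hz, hfz⟩ := intermediate_value_uIcc hcont.continuousOn hroot
  exact ⟨z, (lt_min hz₀ ha).trans_le hz.1, hfz⟩

theorem stmt_2_general (d : ℕ) (hd : 3 ≤ d) (z₁ α : ℝ) (hz₁pos : 0 < z₁)
    (hα : z₁ / ((d : ℝ) * (1 - Real.exp (-z₁)) ^ (d - 1)) < α) :
    ∃ z : ℝ, 0 < z ∧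
      (z / (α * d)) ^ (1 / ((d : ℝ) - 1)) + Real.exp (-z) - 1 = 0 := by
  have hd₁ : (0 : ℝ) < d - 1 := by
    have : (3 : ℝ) ≤ d := by exact_mod_cast hd
    linarith
  have hq : 0 < 1 - exp (-z₁) := sub_pos.mpr (exp_lt_one_iff.mpr (neg_lt_zero.mpr hz₁pos))
  have hα₀ : 0 < α := (by positivity : 0 < z₁ / (d * (1 - exp (-z₁)) ^ (d - 1))).trans hα
  have hαd : 0 < α * d := mul_pos hα₀ (by linarith)
  have hpow : z₁ / (α * d) < (1 - exp (-z₁)) ^ ((d : ℝ) - 1) := by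
    rw [← Nat.cast_pred (by omega), rpow_natCast, mul_comm, ← div_div,
      div_lt_comm₀ (by linarith) (by positivity), div_div]
    exact hα
  refine exists_pos_rpow_div_add_exp_neg_sub_one_eq_zero hαd (by positivity) hz₁pos ?_
  have := (rpow_inv_lt_iff_of_pos (by positivity) hq.le hd₁).mpr hpow
  rw [one_div]
  linarith

/-- Fix an integer `d ≥ 3`, let `z₁ > 0` solve `z₁ = (e^{z₁}-1)/(d-1)` and
`α₁ = z₁/(d(1-e^{-z₁})^{d-1})`. If `α > α₁` then the equation
`(z/(αd))^{1/(d-1)} + e^{-z} - 1 = 0` has a solution `z > 0`. -/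
theorem stmt_2 (d : ℕ) (hd : 3 ≤ d) (z₁ α : ℝ) (hz₁pos : 0 < z₁)
    (hz₁eq : z₁ = (Real.exp z₁ - 1) / ((d : ℝ) - 1))
    (hα : z₁ / ((d : ℝ) * (1 - Real.exp (-z₁)) ^ (d - 1)) < α) :
    ∃ z : ℝ, 0 < z ∧
      (z / (α * d)) ^ (1 / ((d : ℝ) - 1)) + Real.exp (-z) - 1 = 0 :=
  stmt_2_general d hd z₁ α hz₁pos hα
end

section
/- Let d ≥ 3 be an integer, α > 0, n = αm, and f(u) = e^u − u − 1. For t ∈ [0, t₁) let ζ = ζ(t) ∈ (0, αd] be defined implicitly by t = n(1 − (ζ/(αd))^{d/(d−1)}), and set w = n − t = (ζ/(αd))^{d/(d−1)} n, y(t) = e^{−ζ} f(ζ) m, and y₁(t) = m ζ ((ζ/(αd))^{1/(d−1)} + e^{−ζ} − 1). Then these functions satisfy the differential equations dy₁/dt = −1 − ((d−1)/(dw)) y₁ + ((d−1)/(dw)) · y ζ² / f(ζ) and dy/dt = −((d−1)/(dw)) · y ζ² / f(ζ), together with the constraint ζ(e^ζ − 1)/f(ζ) = (dw − y₁)/y,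 the relation (1/ζ)(dζ/dt) = −(d−1)/(dw), and the boundary conditions ζ(0) = αd, y₁(0) = m α d e^{−αd}, y(0) = m(1 − (1 + αd) e^{−αd}). -/
/-!
Solving the implicit relation gives `ζ = αd (w/n)^((d-1)/d)`, whose logarithmic derivative is
`-(d-1)/(dw)`. The same relation yields `m ζ (ζ/(αd))^(1/(d-1)) = d w`, so
`y₁ = d w + m ζ (e^{-ζ} - 1)` and `y = m (1 - (1 + ζ) e^{-ζ})` are explicit functions of `t`
and `ζ`; both differential equations then follow from the chain rule, and the constraint is
algebra.
-/

open Real Set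

lemma exp_neg_mul_exp_sub_sub_one (z : ℝ) :
    exp (-z) * (exp z - z - 1) = 1 - (1 + z) * exp (-z) := by
  rw [mul_sub, mul_sub, ← exp_add, neg_add_cancel, exp_zero]
  ring

lemma exp_sub_sub_one_pos {z : ℝ} (hz : z ≠ 0) : 0 < exp z - z - 1 := by
  linarith [add_one_lt_exp hz]

lemma hasDerivAt_one_sub_one_add_mul_exp_neg (z : ℝ) :
    HasDerivAt (fun u => 1 - (1 + u) * exp (-u)) (z * exp (-z)) z := by
  have := (((hasDerivAt_id' z).const_add 1).mul (hasDerivAt_neg z).exp).const_sub 1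
  exact this.congr_deriv (by ring)

lemma hasDerivAt_mul_exp_neg_sub_one (z : ℝ) :
    HasDerivAt (fun u => u * (exp (-u) - 1)) (exp (-z) - 1 - z * exp (-z)) z := by
  have := (hasDerivAt_id' z).mul ((hasDerivAt_neg z).exp.sub_const 1)
  exact this.congr_deriv (by ring)

lemma hasDerivAt_mul_sub_div_rpow {c n β t : ℝ} (hn : n ≠ 0) (ht : t ≠ n) :
    HasDerivAt (fun s => c * ((n - s) / n) ^ β)
      (-(β / (n - t)) * (c * ((n - t) / n) ^ β)) t := by
  have hnt : (n - t) / n ≠ 0 := div_ne_zero (sub_ne_zero.2 ht.symm) hn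
  have := ((((hasDerivAt_id' t).const_sub n).div_const n).rpow_const (p := β)
    (Or.inl hnt)).const_mul c
  refine this.congr_deriv ?_
  rw [rpow_sub_one hnt]
  field_simp

section ImplicitRelation

variable {c n p z t : ℝ}

lemma sub_pos_of_eq_mul_one_sub_rpow (hc : 0 < c) (hn : 0 < n) (hz : 0 < z)
    (h : t = n * (1 - (z / c) ^ p)) : 0 < n - t := by
  rw [h]
  have := rpow_pos_of_pos (div_pos hz hc) p
  nlinarith

lemma eq_mul_rpow_inv_of_eq_mul_one_sub_rpow (hc : 0 < c) (hn : 0 < n) (hp : p ≠ 0)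
    (hz : 0 ≤ z) (h : t = n * (1 - (z / c) ^ p)) :
    z = c * ((n - t) / n) ^ p⁻¹ := by
  have : (n - t) / n = (z / c) ^ p := by
    rw [h]
    field_simp
    ring
  rw [this, rpow_rpow_inv (by positivity) hp]
  field_simp

lemma mul_div_rpow_one_div_sub_one_of_eq_mul_one_sub_rpow {D : ℝ} (hc : 0 < c) (hn : 0 < n)
    (hD : 1 < D) (hz : 0 < z) (h : t = n * (1 - (z / c) ^ (D / (D - 1)))) :
    z * (z / c) ^ (1 / (D - 1)) = c * ((n - t) / n) := by
  have hD1 : D - 1 ≠ 0 := by linarith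
  have hsplit : (z / c) ^ (D / (D - 1)) = z / c * (z / c) ^ (1 / (D - 1)) := by
    rw [← rpow_one_add' (by positivity) (by positivity)]
    congr 1
    field_simp
    ring
  rw [h, hsplit]
  field_simp
  ring

lemma hasDerivWithinAt_of_eq_mul_one_sub_rpow {ζ : ℝ → ℝ} {s : Set ℝ} (hc : 0 < c)
    (hn : 0 < n) (hp : p ≠ 0) (hζ : ∀ t ∈ s, 0 < ζ t ∧ t = n * (1 - (ζ t / c) ^ p))
    (ht : t ∈ s) : HasDerivWithinAt ζ (-(p⁻¹ / (n - t)) * ζ t) s t := by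
  have hζ_eq : EqOn ζ (fun t => c * ((n - t) / n) ^ p⁻¹) s := fun t ht =>
    eq_mul_rpow_inv_of_eq_mul_one_sub_rpow hc hn hp (hζ t ht).1.le (hζ t ht).2
  have htn : t ≠ n :=
    (sub_pos.1 (sub_pos_of_eq_mul_one_sub_rpow hc hn (hζ t ht).1 (hζ t ht).2)).ne
  rw [hζ_eq ht]
  exact (hasDerivAt_mul_sub_div_rpow hn.ne' htn).hasDerivWithinAt.congr hζ_eq (hζ_eq ht)

end ImplicitRelation

section LogDerivative

variable {ζ : ℝ → ℝ} {s : Set ℝ} {t P : ℝ}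

lemma HasDerivWithinAt.one_sub_one_add_mul_exp_neg (hζ : HasDerivWithinAt ζ (-P * ζ t) s t)
    (m : ℝ) : HasDerivWithinAt (fun t => m * (1 - (1 + ζ t) * Real.exp (-ζ t)))
      (-P * (m * (ζ t * (ζ t * Real.exp (-ζ t))))) s t :=
  (((hasDerivAt_one_sub_one_add_mul_exp_neg (ζ t)).comp_hasDerivWithinAt t hζ).const_mul m
    ).congr_deriv (by ring)

lemma HasDerivWithinAt.sub_add_mul_mul_exp_neg_sub_one {d n m : ℝ} (hd : d ≠ 0)
    (hnt : n - t ≠ 0) (hζ : HasDerivWithinAt ζ (-((d - 1) / (d * (n - t))) * ζ t) s t) :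
    HasDerivWithinAt (fun t => d * (n - t) + m * (ζ t * (Real.exp (-ζ t) - 1)))
      (-1 - (d - 1) / (d * (n - t)) * (d * (n - t) + m * (ζ t * (Real.exp (-ζ t) - 1)))
        + (d - 1) / (d * (n - t)) * (m * (ζ t * (ζ t * Real.exp (-ζ t))))) s t := by
  refine ((((hasDerivAt_id' t).const_sub n).const_mul d).hasDerivWithinAt.add
    (((hasDerivAt_mul_exp_neg_sub_one (ζ t)).comp_hasDerivWithinAt t hζ).const_mul m)
    ).congr_deriv ?_
  field_simp
  ring

end LogDerivative

/-- With `f(u) = e^u - u - 1`, `n = αm`, and `ζ(t) ∈ (0, αd]` defined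
implicitly on `[0, t₁)` by `t = n(1 - (ζ/(αd))^{d/(d-1)})`, the functions
`w = n - t`, `y = e^{-ζ} f(ζ) m`, `y₁ = mζ((ζ/(αd))^{1/(d-1)} + e^{-ζ} - 1)` satisfy the
differential equations `y₁' = -1 - ((d-1)/(dw)) y₁ + ((d-1)/(dw)) yζ²/f(ζ)`,
`y' = -((d-1)/(dw)) yζ²/f(ζ)`, the constraint `ζ(e^ζ-1)/f(ζ) = (dw - y₁)/y`, the relation
`ζ'/ζ = -(d-1)/(dw)`, and the boundary conditions `ζ(0) = αd`, `y₁(0) = mαd e^{-αd}`,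
`y(0) = m(1 - (1+αd)e^{-αd})`. -/
theorem stmt_4 (d : ℕ) (hd : 3 ≤ d) (α m : ℝ) (hα : 0 < α) (hm : 0 < m)
    (f : ℝ → ℝ) (hf : ∀ u, f u = Real.exp u - u - 1)
    (n : ℝ) (hn : n = α * m)
    (t₁ : ℝ) (ht₁ : 0 < t₁)
    (ζ : ℝ → ℝ)
    (hζ : ∀ t ∈ Set.Ico (0 : ℝ) t₁, ζ t ∈ Set.Ioc 0 (α * d) ∧
      t = n * (1 - (ζ t / (α * d)) ^ ((d : ℝ) / ((d : ℝ) - 1))))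
    (w y y₁ : ℝ → ℝ)
    (hw : ∀ t, w t = n - t)
    (hy : ∀ t, y t = Real.exp (-ζ t) * f (ζ t) * m)
    (hy₁ : ∀ t, y₁ t = m * ζ t *
      ((ζ t / (α * d)) ^ (1 / ((d : ℝ) - 1)) + Real.exp (-ζ t) - 1)) :
    (∀ t ∈ Set.Ico (0 : ℝ) t₁,
      HasDerivWithinAt y₁
        (-1 - ((d : ℝ) - 1) / ((d : ℝ) * w t) * y₁ t
          + ((d : ℝ) - 1) / ((d : ℝ) * w t) * (y t * ζ t ^ 2 / f (ζ t)))
        (Set.Ico (0 : ℝ) t₁) t ∧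
      HasDerivWithinAt y
        (-(((d : ℝ) - 1) / ((d : ℝ) * w t)) * (y t * ζ t ^ 2 / f (ζ t)))
        (Set.Ico (0 : ℝ) t₁) t ∧
      ζ t * (Real.exp (ζ t) - 1) / f (ζ t) = ((d : ℝ) * w t - y₁ t) / y t ∧
      HasDerivWithinAt ζ (-(((d : ℝ) - 1) / ((d : ℝ) * w t)) * ζ t)
        (Set.Ico (0 : ℝ) t₁) t) ∧
    ζ 0 = α * d ∧
    y₁ 0 = m * (α * d) * Real.exp (-(α * d)) ∧
    y 0 = m * (1 - (1 + α * d) * Real.exp (-(α * d))) := by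
  obtain rfl : f = fun u => exp u - u - 1 := funext hf
  obtain rfl : w = fun t => n - t := funext hw
  have hd1 : (1 : ℝ) < d := by exact_mod_cast (by omega : 1 < d)
  have hαd : 0 < α * d := by positivity
  have hn₀ : 0 < n := hn ▸ by positivity
  set s := Ico (0 : ℝ) t₁
  have hζ_pos : ∀ t ∈ s, 0 < ζ t := fun t ht => (hζ t ht).1.1
  have hζ' : ∀ t ∈ s, HasDerivWithinAt ζ (-(((d : ℝ) - 1) / (d * (n - t))) * ζ t) s t := by
    intro t ht
    rw [← div_div, ← inv_div (d : ℝ)]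
    exact hasDerivWithinAt_of_eq_mul_one_sub_rpow hαd hn₀ (by positivity)
      (fun t ht => ⟨hζ_pos t ht, (hζ t ht).2⟩) ht
  have hy₁_eq : EqOn y₁ (fun t => d * (n - t) + m * (ζ t * (exp (-ζ t) - 1))) s := by
    intro t ht
    have := mul_div_rpow_one_div_sub_one_of_eq_mul_one_sub_rpow hαd hn₀ hd1 (hζ_pos t ht)
      (hζ t ht).2
    rw [hy₁]
    rw [hn] at this ⊢
    field_simp at this ⊢
    linear_combination this
  have hy_eq : y = fun t => m * (1 - (1 + ζ t) * exp (-ζ t)) := by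
    ext t
    rw [hy, exp_neg_mul_exp_sub_sub_one]
    ring
  have hζ0 : ζ 0 = α * d := by
    simpa [hn₀.ne'] using eq_mul_rpow_inv_of_eq_mul_one_sub_rpow hαd hn₀ (by positivity)
      (hζ_pos 0 ⟨le_rfl, ht₁⟩).le (hζ 0 ⟨le_rfl, ht₁⟩).2
  refine ⟨fun t ht => ?_, hζ0, ?_, ?_⟩
  · have hf₀ : exp (ζ t) - ζ t - 1 ≠ 0 := (exp_sub_sub_one_pos (hζ_pos t ht).ne').ne'
    have hq : y t * ζ t ^ 2 / (exp (ζ t) - ζ t - 1) = m * (ζ t * (ζ t * exp (-ζ t))) := by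
      rw [hy]
      field_simp
    simp only [hq]
    refine ⟨?_, ?_, ?_, hζ' t ht⟩
    · rw [hy₁_eq ht]
      have hw₀ := sub_pos_of_eq_mul_one_sub_rpow hαd hn₀ (hζ_pos t ht) (hζ t ht).2
      exact ((hζ' t ht).sub_add_mul_mul_exp_neg_sub_one (by positivity) hw₀.ne').congr
        hy₁_eq (hy₁_eq ht)
    · exact hy_eq ▸ (hζ' t ht).one_sub_one_add_mul_exp_neg m
    · simp only [hy₁_eq ht, hy, exp_neg]
      field_simp
      ring
  · rw [hy₁, hζ0, div_self hαd.ne', one_rpow]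
    ring
  · rw [hy, hζ0, exp_neg_mul_exp_sub_sub_one]
    ring
end

section
/- Let f(u) = e^u − u − 1 and for x > 2 let ζ(x) > 0 be the unique positive solution of u(e^u − 1)/f(u) = x. Define g(x) = (e^{ζ(x)} − 1)^x · f(ζ(x))^{1−x}. Then g is log-concave on (2, ∞); more precisely, (d²/dx²) log g(x) = (ζ'(x)/((e^ζ − 1) f(ζ))) · (−(ζ − 1)e^ζ − 1) < 0 for all x > 2, where ζ = ζ(x). -/
open Real Filter Set Topology

/-! With `H u = u (eᵘ - 1) / f u` (`expRatio`), `ζ` inverts `H` on `(2, ∞)`, and `H` is strictly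
increasing on `(0, ∞)` since `(eᵘ - 1)² - u² eᵘ = eᵘ ((2 sinh (u / 2))² - u²) > 0`. Substituting
`x = H (ζ x)` gives `log g = Λ ∘ ζ` with `Λ u = H u log (eᵘ - 1) + (1 - H u) log (f u)`
(`logProfile`), and a direct computation gives `Λ' = H' · Ψ` with
`Ψ u = log (eᵘ - 1) - log (f u) + 1` (`logSlope`), so `(log g)' = Ψ ∘ ζ` and
`(log g)'' = Ψ'(ζ) ζ'`, where `Ψ' u = (-(u - 1) eᵘ - 1) / ((eᵘ - 1) f u)` is negative because
`e⁻ᵘ > 1 - u`. -/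

theorem hasDerivAt_of_rightInvOn_of_strictMonoOn {H ζ : ℝ → ℝ} {s t : Set ℝ} {x H' : ℝ}
    (hs : IsOpen s) (ht : IsOpen t) (hH : StrictMonoOn H s) (hHc : ContinuousOn H s)
    (hζs : MapsTo ζ t s) (hζ : ∀ y ∈ t, H (ζ y) = y) (hx : x ∈ t)
    (hd : HasDerivAt H H' (ζ x)) (hH' : H' ≠ 0) : HasDerivAt ζ H'⁻¹ x := by
  have hmono : MonotoneOn ζ t := fun a ha b hb hab => by
    rwa [← hH.le_iff_le (hζs ha) (hζs hb), hζ a ha, hζ b hb]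
  have himage : s ∩ H ⁻¹' t ⊆ ζ '' t := fun u ⟨hu, hHu⟩ =>
    ⟨H u, hHu, hH.injOn (hζs hHu) hu (hζ _ hHu)⟩
  have hcont : ContinuousAt ζ x :=
    continuousAt_of_monotoneOn_of_image_mem_nhds hmono (ht.mem_nhds hx) <|
      mem_of_superset ((hHc.isOpen_inter_preimage hs ht).mem_nhds
        ⟨hζs hx, by rw [mem_preimage, hζ x hx]; exact hx⟩) himage
  exact hd.of_local_left_inverse hcont hH' (eventually_of_mem (ht.mem_nhds hx) hζ)

theorem exp_sub_sub_one_pos_s5 {u : ℝ} (hu : u ≠ 0) : 0 < exp u - u - 1 := by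
  linarith [add_one_lt_exp hu]

theorem exp_sub_one_pos {u : ℝ} (hu : 0 < u) : 0 < exp u - 1 := by
  linarith [add_one_lt_exp hu.ne']

theorem exp_sub_one_ne_zero {u : ℝ} (hu : u ≠ 0) : exp u - 1 ≠ 0 :=
  sub_ne_zero.2 fun h => hu ((exp_eq_one_iff u).1 h)

theorem sub_one_mul_exp_add_one_pos {u : ℝ} (hu : u ≠ 0) : 0 < (u - 1) * exp u + 1 := by
  have h := mul_lt_mul_of_pos_right (add_one_lt_exp (neg_ne_zero.2 hu)) (exp_pos u)
  rw [← exp_add, neg_add_cancel, exp_zero] at h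
  linarith

theorem sq_mul_exp_lt_sq_exp_sub_one {u : ℝ} (hu : 0 < u) : u ^ 2 * exp u < (exp u - 1) ^ 2 := by
  have hsinh : u / 2 < sinh (u / 2) := self_lt_sinh_iff.2 (half_pos hu)
  have hexp : exp u = exp (u / 2) ^ 2 := by rw [← exp_nat_mul]; ring_nf
  have hsub : exp u - 1 = exp (u / 2) * (2 * sinh (u / 2)) := by
    rw [sinh_eq, hexp, exp_neg]; field_simp
  rw [hsub, hexp, mul_pow, mul_comm]
  gcongr
  linarith

noncomputable def expRatio (u : ℝ) : ℝ := u * (exp u - 1) / (exp u - u - 1)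

noncomputable def expRatioDeriv (u : ℝ) : ℝ :=
  ((exp u - 1) ^ 2 - u ^ 2 * exp u) / (exp u - u - 1) ^ 2

theorem hasDerivAt_expRatio {u : ℝ} (hu : u ≠ 0) : HasDerivAt expRatio (expRatioDeriv u) u := by
  have hf := (exp_sub_sub_one_pos_s5 hu).ne'
  refine (((hasDerivAt_id' u).mul ((hasDerivAt_exp u).sub_const 1)).div
    (((hasDerivAt_exp u).sub (hasDerivAt_id' u)).sub_const 1) hf).congr_deriv ?_
  simp only [expRatioDeriv, Pi.mul_apply, Pi.sub_apply]
  field_simp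
  ring

theorem expRatioDeriv_pos {u : ℝ} (hu : 0 < u) : 0 < expRatioDeriv u :=
  div_pos (sub_pos.2 (sq_mul_exp_lt_sq_exp_sub_one hu)) (pow_pos (exp_sub_sub_one_pos_s5 hu.ne') 2)

theorem strictMonoOn_expRatio : StrictMonoOn expRatio (Ioi 0) :=
  strictMonoOn_of_deriv_pos (convex_Ioi 0)
    (fun _ hu => (hasDerivAt_expRatio (ne_of_gt hu)).continuousAt.continuousWithinAt)
    fun u hu => by
      rw [interior_Ioi] at hu
      rw [(hasDerivAt_expRatio (ne_of_gt hu)).deriv]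
      exact expRatioDeriv_pos hu

noncomputable def logProfile (u : ℝ) : ℝ :=
  expRatio u * log (exp u - 1) + (1 - expRatio u) * log (exp u - u - 1)

noncomputable def logSlope (u : ℝ) : ℝ := log (exp u - 1) - log (exp u - u - 1) + 1

theorem hasDerivAt_log_exp_sub_one {u : ℝ} (hu : u ≠ 0) :
    HasDerivAt (fun v => log (exp v - 1)) (exp u / (exp u - 1)) u :=
  ((hasDerivAt_exp u).sub_const 1).log (exp_sub_one_ne_zero hu)

theorem hasDerivAt_log_exp_sub_sub_one {u : ℝ} (hu : u ≠ 0) :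
    HasDerivAt (fun v => log (exp v - v - 1)) ((exp u - 1) / (exp u - u - 1)) u :=
  (((hasDerivAt_exp u).sub (hasDerivAt_id' u)).sub_const 1).log (exp_sub_sub_one_pos_s5 hu).ne'

theorem expRatio_mul_add_one_sub_expRatio_mul {u : ℝ} (hu : u ≠ 0) :
    expRatio u * (exp u / (exp u - 1)) + (1 - expRatio u) * ((exp u - 1) / (exp u - u - 1)) =
      expRatioDeriv u := by
  have h₁ := exp_sub_one_ne_zero hu
  have h₂ := (exp_sub_sub_one_pos_s5 hu).ne'
  rw [expRatio, expRatioDeriv]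
  field_simp
  ring

theorem hasDerivAt_logProfile {u : ℝ} (hu : u ≠ 0) :
    HasDerivAt logProfile (expRatioDeriv u * logSlope u) u := by
  refine (((hasDerivAt_expRatio hu).mul (hasDerivAt_log_exp_sub_one hu)).add
    (((hasDerivAt_expRatio hu).const_sub 1).mul
      (hasDerivAt_log_exp_sub_sub_one hu))).congr_deriv ?_
  rw [logSlope, ← expRatio_mul_add_one_sub_expRatio_mul hu]
  ring

theorem hasDerivAt_logSlope {u : ℝ} (hu : u ≠ 0) :
    HasDerivAt logSlope ((-(u - 1) * exp u - 1) / ((exp u - 1) * (exp u - u - 1))) u := by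
  have h₁ := exp_sub_one_ne_zero hu
  have h₂ := (exp_sub_sub_one_pos_s5 hu).ne'
  refine (((hasDerivAt_log_exp_sub_one hu).sub
    (hasDerivAt_log_exp_sub_sub_one hu)).add_const 1).congr_deriv ?_
  field_simp
  ring

theorem log_rpow_mul_rpow {a b : ℝ} (ha : 0 < a) (hb : 0 < b) (x : ℝ) :
    log (a ^ x * b ^ (1 - x)) = x * log a + (1 - x) * log b := by
  rw [log_mul (rpow_pos_of_pos ha x).ne' (rpow_pos_of_pos hb _).ne', log_rpow ha, log_rpow hb]

theorem hasDerivAt_inverse_expRatio {ζ : ℝ → ℝ} {t : Set ℝ} (ht : IsOpen t)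
    (hζ : ∀ x ∈ t, 0 < ζ x ∧ expRatio (ζ x) = x) {x : ℝ} (hx : x ∈ t) :
    HasDerivAt ζ (expRatioDeriv (ζ x))⁻¹ x :=
  hasDerivAt_of_rightInvOn_of_strictMonoOn isOpen_Ioi ht strictMonoOn_expRatio
    (fun _ hu => (hasDerivAt_expRatio (ne_of_gt hu)).continuousAt.continuousWithinAt)
    (fun y hy => (hζ y hy).1) (fun y hy => (hζ y hy).2) hx
    (hasDerivAt_expRatio (hζ x hx).1.ne') (expRatioDeriv_pos (hζ x hx).1).ne'

/-- With `f(u) = e^u - u - 1`, `ζ(x)` the unique positive root of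
`ζ(e^ζ-1)/f(ζ) = x` for `x > 2`, and `g(x) = (e^{ζ(x)}-1)^x f(ζ(x))^{1-x}`, the function
`g` is log-concave on `(2, ∞)`; more precisely
`(log g)''(x) = (ζ'(x)/((e^ζ-1)f(ζ))) · (-(ζ-1)e^ζ - 1) < 0`. -/
theorem stmt_5 (f ζ g : ℝ → ℝ)
    (hf : ∀ u, f u = Real.exp u - u - 1)
    (hζ : ∀ x > 2, 0 < ζ x ∧ ζ x * (Real.exp (ζ x) - 1) / f (ζ x) = x)
    (hg : ∀ x, g x = (Real.exp (ζ x) - 1) ^ x * f (ζ x) ^ (1 - x)) :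
    ConcaveOn ℝ (Set.Ioi 2) (fun x => Real.log (g x)) ∧
    ∀ x > 2,
      deriv (deriv (fun t => Real.log (g t))) x =
        deriv ζ x / ((Real.exp (ζ x) - 1) * f (ζ x)) *
          (-(ζ x - 1) * Real.exp (ζ x) - 1) ∧
      deriv (deriv (fun t => Real.log (g t))) x < 0 := by
  have hζ' : ∀ x ∈ Ioi 2, 0 < ζ x ∧ expRatio (ζ x) = x := fun x hx => by
    simpa only [expRatio, ← hf] using hζ x hx
  have hζd x (hx : x ∈ Ioi 2) := hasDerivAt_inverse_expRatio isOpen_Ioi hζ' hx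
  have hlog : EqOn (fun t => log (g t)) (logProfile ∘ ζ) (Ioi 2) := fun x hx => by
    obtain ⟨hpos, hx'⟩ := hζ' x hx
    simp only [hg, hf, Function.comp_apply, logProfile, hx',
      log_rpow_mul_rpow (exp_sub_one_pos hpos) (exp_sub_sub_one_pos_s5 hpos.ne')]
  have hd1 x (hx : x ∈ Ioi 2) : HasDerivAt (fun t => log (g t)) (logSlope (ζ x)) x := by
    have hpos := (hζ' x hx).1
    refine (((hasDerivAt_logProfile hpos.ne').comp x (hζd x hx)).congr_of_eventuallyEq
      (eventuallyEq_of_mem (isOpen_Ioi.mem_nhds hx) hlog)).congr_deriv ?_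
    field_simp [(expRatioDeriv_pos hpos).ne']
  have hd2 x (hx : x ∈ Ioi 2) : HasDerivAt (deriv fun t => log (g t))
      (deriv ζ x / ((exp (ζ x) - 1) * f (ζ x)) * (-(ζ x - 1) * exp (ζ x) - 1)) x := by
    refine (((hasDerivAt_logSlope (hζ' x hx).1.ne').comp x (hζd x hx)).congr_of_eventuallyEq
      (eventuallyEq_of_mem (isOpen_Ioi.mem_nhds hx) fun y hy => (hd1 y hy).deriv)).congr_deriv ?_
    rw [(hζd x hx).deriv, hf]
    ring
  have hneg x (hx : x ∈ Ioi 2) : deriv (deriv fun t => log (g t)) x < 0 := by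
    have hpos := (hζ' x hx).1
    rw [(hd2 x hx).deriv, (hζd x hx).deriv, hf]
    refine mul_neg_of_pos_of_neg (div_pos (inv_pos.2 (expRatioDeriv_pos hpos))
      (mul_pos (exp_sub_one_pos hpos) (exp_sub_sub_one_pos_s5 hpos.ne'))) ?_
    linarith [sub_one_mul_exp_add_one_pos hpos.ne']
  refine ⟨concaveOn_of_deriv2_nonpos' (convex_Ioi 2)
    (fun x hx => (hd1 x hx).differentiableAt.differentiableWithinAt)
    (fun x hx => (hd2 x hx).differentiableAt.differentiableWithinAt)
    (fun x hx => (hneg x hx).le), fun x hx => ⟨(hd2 x hx).deriv, hneg x hx⟩⟩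
end

section
/- Let f(u) = e^u − u − 1 and define H(u) = log f(u) − u − 2 log u = log((e^u − u − 1)/(u² e^u)) for u > 0. Then H is convex on (0, ∞): H''(u) = (2e^{2u} + u²e^u + u² + 4u + 2 − u³e^u − 4ue^u − 4e^u)/(u² f(u)²) ≥ 0 for all u > 0. -/
/-!
Differentiating twice, `H'' = N / (u² f²)` with `N` the numerator in the statement. `N` vanishes
at `0` together with its derivatives `N₁ = N'` and `N₂ = N''`, and
`N₂' = e^u (16 e^u - (u³ + 8u² + 16u + 16)) ≥ 0` for `u ≥ 0` by the cubic Taylor bound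
`e^u ≥ 1 + u + u²/2 + u³/6`; integrating three times from `0` gives `N ≥ 0`.
-/

open Real Set

lemma nonneg_of_hasDerivAt_of_nonneg {g g' : ℝ → ℝ} (hg : ∀ x, HasDerivAt g (g' x) x)
    (h0 : g 0 = 0) (hg' : ∀ x, 0 ≤ x → 0 ≤ g' x) {x : ℝ} (hx : 0 ≤ x) : 0 ≤ g x := by
  have hmono : MonotoneOn g (Ici 0) :=
    monotoneOn_of_hasDerivWithinAt_nonneg (convex_Ici 0)
      (fun y _ => (hg y).continuousAt.continuousWithinAt)
      (fun y _ => (hg y).hasDerivWithinAt)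
      (fun y hy => hg' y (interior_subset hy))
  simpa [h0] using hmono self_mem_Ici hx hx

namespace ExpTaylorRemainder

noncomputable def N (u : ℝ) : ℝ :=
  2 * exp (2 * u) + u ^ 2 * exp u + u ^ 2 + 4 * u + 2
    - u ^ 3 * exp u - 4 * u * exp u - 4 * exp u

noncomputable def N₁ (u : ℝ) : ℝ :=
  4 * exp (2 * u) - exp u * (u ^ 3 + 2 * u ^ 2 + 2 * u + 8) + 2 * u + 4

noncomputable def N₂ (u : ℝ) : ℝ :=
  8 * exp (2 * u) - exp u * (u ^ 3 + 5 * u ^ 2 + 6 * u + 10) + 2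

lemma hasDerivAt_exp_two_mul (x : ℝ) :
    HasDerivAt (fun u => exp (2 * u)) (2 * exp (2 * x)) x := by
  simpa [mul_comm] using ((hasDerivAt_id x).const_mul 2).exp

lemma hasDerivAt_N (x : ℝ) : HasDerivAt N (N₁ x) x := by
  have e := hasDerivAt_exp x
  have h := ((((((hasDerivAt_exp_two_mul x).const_mul 2).add ((hasDerivAt_pow 2 x).mul e)).add
    (hasDerivAt_pow 2 x)).add ((hasDerivAt_id x).const_mul 4)).add_const 2).sub
    ((hasDerivAt_pow 3 x).mul e) |>.sub (((hasDerivAt_id x).const_mul 4).mul e)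
    |>.sub (e.const_mul 4)
  refine h.congr_deriv ?_
  simp only [N₁, id_eq]; push_cast; ring

lemma hasDerivAt_N₁ (x : ℝ) : HasDerivAt N₁ (N₂ x) x := by
  have h := ((((hasDerivAt_exp_two_mul x).const_mul 4).sub ((hasDerivAt_exp x).mul
    ((((hasDerivAt_pow 3 x).add ((hasDerivAt_pow 2 x).const_mul 2)).add
      ((hasDerivAt_id x).const_mul 2)).add_const 8))).add
    ((hasDerivAt_id x).const_mul 2)).add_const 4
  refine h.congr_deriv ?_
  simp only [N₂, Pi.add_apply, id_eq]; push_cast; ring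

lemma hasDerivAt_N₂ (x : ℝ) :
    HasDerivAt N₂ (16 * exp (2 * x) - exp x * (x ^ 3 + 8 * x ^ 2 + 16 * x + 16)) x := by
  have h := (((hasDerivAt_exp_two_mul x).const_mul 8).sub ((hasDerivAt_exp x).mul
    ((((hasDerivAt_pow 3 x).add ((hasDerivAt_pow 2 x).const_mul 5)).add
      ((hasDerivAt_id x).const_mul 6)).add_const 10))).add_const 2
  refine h.congr_deriv ?_
  simp only [Pi.add_apply, id_eq]; push_cast; ring

lemma N₂_deriv_nonneg {x : ℝ} (hx : 0 ≤ x) :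
    0 ≤ 16 * exp (2 * x) - exp x * (x ^ 3 + 8 * x ^ 2 + 16 * x + 16) := by
  have htaylor : 16 * (1 + x + x ^ 2 / 2 + x ^ 3 / 6) ≤ 16 * exp x := by
    have := sum_le_exp_of_nonneg hx 4
    norm_num [Finset.sum_range_succ, Nat.factorial] at this
    linarith
  have hpoly : x ^ 3 + 8 * x ^ 2 + 16 * x + 16 ≤ 16 * exp x := by
    nlinarith [pow_nonneg hx 3]
  rw [show 2 * x = x + x by ring, exp_add]
  nlinarith [exp_pos x]

lemma N_nonneg {x : ℝ} (hx : 0 ≤ x) : 0 ≤ N x := by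
  refine nonneg_of_hasDerivAt_of_nonneg hasDerivAt_N (by norm_num [N]) (fun y hy => ?_) hx
  refine nonneg_of_hasDerivAt_of_nonneg hasDerivAt_N₁ (by norm_num [N₁]) (fun z hz => ?_) hy
  exact nonneg_of_hasDerivAt_of_nonneg hasDerivAt_N₂ (by norm_num [N₂])
    (fun _ => N₂_deriv_nonneg) hz

lemma exp_sub_self_sub_one_pos {u : ℝ} (hu : u ≠ 0) : 0 < exp u - u - 1 := by
  linarith [add_one_lt_exp hu]

noncomputable def H (u : ℝ) : ℝ := log (exp u - u - 1) - u - 2 * log u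

noncomputable def H' (u : ℝ) : ℝ := (exp u - 1) / (exp u - u - 1) - 1 - 2 * u⁻¹

noncomputable def H'' (u : ℝ) : ℝ := N u / (u ^ 2 * (exp u - u - 1) ^ 2)

lemma H''_nonneg {u : ℝ} (hu : 0 ≤ u) : 0 ≤ H'' u :=
  div_nonneg (N_nonneg hu) (by positivity)

lemma hasDerivAt_exp_sub_self_sub_one (u : ℝ) :
    HasDerivAt (fun x => exp x - x - 1) (exp u - 1) u :=
  ((hasDerivAt_exp u).sub (hasDerivAt_id u)).sub_const 1

lemma hasDerivAt_H {u : ℝ} (hu : 0 < u) : HasDerivAt H (H' u) u := by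
  have hlog := (hasDerivAt_exp_sub_self_sub_one u).log (exp_sub_self_sub_one_pos hu.ne').ne'
  exact (hlog.sub (hasDerivAt_id u)).sub ((hasDerivAt_log hu.ne').const_mul 2)

lemma hasDerivAt_H' {u : ℝ} (hu : 0 < u) : HasDerivAt H' (H'' u) u := by
  have hf := (exp_sub_self_sub_one_pos hu.ne').ne'
  have hquot := ((hasDerivAt_exp u).sub_const 1).div (hasDerivAt_exp_sub_self_sub_one u) hf
  refine (hquot.sub_const 1).sub ((hasDerivAt_inv hu.ne').const_mul 2) |>.congr_deriv ?_
  rw [H'', N, show 2 * u = u + u by ring, exp_add]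
  field_simp
  ring

lemma deriv_deriv_H {u : ℝ} (hu : 0 < u) : deriv (deriv H) u = H'' u := by
  have hderiv : deriv H =ᶠ[nhds u] H' :=
    Filter.eventually_of_mem (Ioi_mem_nhds hu) fun x hx => (hasDerivAt_H hx).deriv
  rw [hderiv.deriv_eq, (hasDerivAt_H' hu).deriv]

lemma convexOn_H : ConvexOn ℝ (Ioi 0) H := by
  refine convexOn_of_hasDerivWithinAt2_nonneg (f' := H') (f'' := H'') (convex_Ioi 0)
    (fun u hu => (hasDerivAt_H hu).continuousAt.continuousWithinAt) ?_ ?_ ?_ <;>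
    rw [interior_Ioi]
  · exact fun u hu => (hasDerivAt_H hu).hasDerivWithinAt
  · exact fun u hu => (hasDerivAt_H' hu).hasDerivWithinAt
  · exact fun u hu => H''_nonneg hu.le

end ExpTaylorRemainder

/-- With `f(u) = e^u - u - 1` and `H(u) = log f(u) - u - 2 log u`, the
function `H` is convex on `(0, ∞)`, with
`H''(u) = (2e^{2u} + u²e^u + u² + 4u + 2 - u³e^u - 4ue^u - 4e^u)/(u² f(u)²) ≥ 0`. -/
theorem stmt_7 (f H : ℝ → ℝ)
    (hf : ∀ u, f u = Real.exp u - u - 1)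
    (hH : ∀ u, H u = Real.log (f u) - u - 2 * Real.log u) :
    ConvexOn ℝ (Set.Ioi 0) H ∧
    ∀ u > 0,
      deriv (deriv H) u =
        (2 * Real.exp (2 * u) + u ^ 2 * Real.exp u + u ^ 2 + 4 * u + 2
          - u ^ 3 * Real.exp u - 4 * u * Real.exp u - 4 * Real.exp u)
          / (u ^ 2 * f u ^ 2) ∧
      0 ≤ deriv (deriv H) u := by
  obtain rfl : f = fun u => exp u - u - 1 := funext hf
  obtain rfl : H = ExpTaylorRemainder.H := funext hH
  refine ⟨ExpTaylorRemainder.convexOn_H, fun u hu => ?_⟩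
  rw [ExpTaylorRemainder.deriv_deriv_H hu]
  exact ⟨rfl, ExpTaylorRemainder.H''_nonneg hu.le⟩
end

section
/- Let f(u) = e^u − u − 1 and for y > 2 let ζ(y) > 0 be the unique positive solution of u(e^u − 1)/f(u) = y. Then ζ(y) ≤ 3(y − 2) for all y > 2. -/
/-!
Clearing the positive denominator `e^u - u - 1`, the bound `u ≤ 3 (y - 2)` becomes
`0 ≤ (2u - 6) e^u + u² + 4u + 6 = ∑_{n ≥ 4} (2n - 6) uⁿ / n!`. On `u ≥ 0` this follows from
three differentiations: each derivative vanishes at `0`, and the third is `2u e^u ≥ 0`.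
-/

open Real

lemma nonneg_of_hasDerivAt_of_deriv_nonneg {g g' : ℝ → ℝ} (hg : ∀ x, HasDerivAt g (g' x) x)
    (hg0 : g 0 = 0) (hg' : ∀ x, 0 ≤ x → 0 ≤ g' x) : ∀ x, 0 ≤ x → 0 ≤ g x := by
  intro x hx
  have hmono : MonotoneOn g (Set.Ici 0) :=
    monotoneOn_of_hasDerivWithinAt_nonneg (convex_Ici 0)
      (fun y _ => (hg y).continuousAt.continuousWithinAt)
      (fun y _ => (hg y).hasDerivWithinAt)
      (fun y hy => hg' y (le_of_lt (by simpa using hy)))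
  simpa [hg0] using hmono Set.self_mem_Ici hx hx

lemma two_mul_sub_six_mul_exp_add_nonneg {u : ℝ} (hu : 0 ≤ u) :
    0 ≤ (2 * u - 6) * exp u + u ^ 2 + 4 * u + 6 := by
  have hd2 (x : ℝ) : HasDerivAt (fun u => (2 * u - 2) * exp u + 2) (2 * x * exp x) x :=
    ((((hasDerivAt_id' x).const_mul 2).sub_const 2).mul (hasDerivAt_exp x)
      |>.add_const 2).congr_deriv (by ring)
  have hd1 (x : ℝ) : HasDerivAt (fun u => (2 * u - 4) * exp u + 2 * u + 4)
      ((2 * x - 2) * exp x + 2) x :=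
    ((((hasDerivAt_id' x).const_mul 2).sub_const 4).mul (hasDerivAt_exp x)
      |>.add ((hasDerivAt_id' x).const_mul 2) |>.add_const 4).congr_deriv (by ring)
  have hd0 (x : ℝ) : HasDerivAt (fun u => (2 * u - 6) * exp u + u ^ 2 + 4 * u + 6)
      ((2 * x - 4) * exp x + 2 * x + 4) x :=
    ((((hasDerivAt_id' x).const_mul 2).sub_const 6).mul (hasDerivAt_exp x)
      |>.add (hasDerivAt_pow 2 x) |>.add ((hasDerivAt_id' x).const_mul 4)
      |>.add_const 6).congr_deriv (by ring)
  have h2 := nonneg_of_hasDerivAt_of_deriv_nonneg hd2 (by simp) fun x hx => by positivity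
  have h1 := nonneg_of_hasDerivAt_of_deriv_nonneg hd1 (by simp) h2
  exact nonneg_of_hasDerivAt_of_deriv_nonneg hd0 (by simp) h1 u hu

lemma le_three_mul_sub_two_of_mul_exp_sub_one_div {u y : ℝ} (hu : 0 < u)
    (hy : u * (exp u - 1) / (exp u - u - 1) = y) : u ≤ 3 * (y - 2) := by
  have hden : 0 < exp u - u - 1 := by linarith [add_one_lt_exp hu.ne']
  rw [div_eq_iff hden.ne'] at hy
  refine le_of_mul_le_mul_right ?_ hden
  nlinarith [two_mul_sub_six_mul_exp_add_nonneg hu.le]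

/-- With `f(u) = e^u - u - 1` and `ζ(y)` the unique positive root of
`ζ(e^ζ-1)/f(ζ) = y` for `y > 2`, one has `ζ(y) ≤ 3(y-2)` for all `y > 2`. -/
theorem stmt_9 (f ζ : ℝ → ℝ)
    (hf : ∀ u, f u = Real.exp u - u - 1)
    (hζ : ∀ y > 2, 0 < ζ y ∧ ζ y * (Real.exp (ζ y) - 1) / f (ζ y) = y) :
    ∀ y > 2, ζ y ≤ 3 * (y - 2) := by
  intro y hy
  obtain ⟨hpos, hroot⟩ := hζ y hy
  rw [hf] at hroot
  exact le_three_mul_sub_two_of_mul_exp_sub_one_div hpos hroot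
end

section
/- Let f(u) = e^u − u − 1 and for x > 2 let ζ(x) > 0 be the unique positive solution of u(e^u − 1)/f(u) = x. Then ζ(x) ≥ x − 2 for all x > 2. -/
/-! Clearing the denominator `f(ζ) > 0`, the claim `x ≤ ζ + 2` becomes
`ζ (e^ζ - 1) ≤ (ζ + 2) (e^ζ - ζ - 1)`, whose difference is `2 (e^ζ - 1 - ζ - ζ²/2) ≥ 0`. -/

namespace Real

lemma mul_exp_sub_one_le_add_two_mul {z : ℝ} (hz : 0 ≤ z) :
    z * (exp z - 1) ≤ (z + 2) * (exp z - z - 1) := by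
  nlinarith [quadratic_le_exp_of_nonneg hz]

lemma mul_exp_sub_one_div_le_add_two {z : ℝ} (hz : 0 < z) :
    z * (exp z - 1) / (exp z - z - 1) ≤ z + 2 := by
  have hpos : 0 < exp z - z - 1 := by linarith [add_one_lt_exp hz.ne']
  rw [div_le_iff₀ hpos]
  exact mul_exp_sub_one_le_add_two_mul hz.le

end Real

/-- With `f(u) = e^u - u - 1` and `ζ(x)` the unique positive root of
`ζ(e^ζ-1)/f(ζ) = x` for `x > 2`, one has `ζ(x) ≥ x - 2` for all `x > 2`. -/
theorem stmt_10 (f ζ : ℝ → ℝ)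
    (hf : ∀ u, f u = Real.exp u - u - 1)
    (hζ : ∀ x > 2, 0 < ζ x ∧ ζ x * (Real.exp (ζ x) - 1) / f (ζ x) = x) :
    ∀ x > 2, x - 2 ≤ ζ x := by
  intro x hx
  obtain ⟨hpos, hroot⟩ := hζ x hx
  have hle := Real.mul_exp_sub_one_div_le_add_two hpos
  rw [← hf, hroot] at hle
  linarith
end

section
/- Let h(x) = x^x (1 − x)^{1−x} for 0 < x < 1, and fix a ∈ (0, 1). Then the function β ↦ β·log h(a/β) is convex on (a, ∞) (its second derivative in β equals a/(β(β − a)) > 0), and consequently for every β ≥ 1, h(a/β)^β ≥ h(a)·(1 − a)^{β−1}. -/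
open Real Set Filter Topology

/-!
For `0 < a < β`, expanding `log h(a/β)` gives
`β log h(a/β) = a log a + (β - a) log (β - a) - β log β`, whose derivative `log (β - a) - log β`
is increasing in `β`. Since this derivative equals `log (1 - a)` at `β = 1`, the inequality is the
tangent-line bound at `β = 1` for this convex function, exponentiated.
-/

noncomputable def logHPerspective (a β : ℝ) : ℝ :=
  a * log a + (β - a) * log (β - a) - β * log β

lemma log_rpow_self_mul_rpow_one_sub {x : ℝ} (hx0 : 0 < x) (hx1 : x < 1) :
    log (x ^ x * (1 - x) ^ (1 - x)) = x * log x + (1 - x) * log (1 - x) := by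
  have h1x : 0 < 1 - x := by linarith
  rw [log_mul (rpow_pos_of_pos hx0 x).ne' (rpow_pos_of_pos h1x _).ne', log_rpow hx0,
    log_rpow h1x]

lemma mul_log_rpow_div_eq_logHPerspective {a β : ℝ} (ha : 0 < a) (hβ : a < β) :
    β * log ((a / β) ^ (a / β) * (1 - a / β) ^ (1 - a / β)) = logHPerspective a β := by
  have hβ0 : 0 < β := ha.trans hβ
  have h1 : 1 - a / β = (β - a) / β := by field_simp
  rw [log_rpow_self_mul_rpow_one_sub (div_pos ha hβ0) ((div_lt_one hβ0).2 hβ), h1,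
    log_div ha.ne' hβ0.ne', log_div (sub_pos.2 hβ).ne' hβ0.ne', logHPerspective]
  field_simp
  ring

lemma hasDerivAt_logHPerspective {a β : ℝ} (hβ0 : β ≠ 0) (hβa : β ≠ a) :
    HasDerivAt (logHPerspective a) (log (β - a) - log β) β := by
  have hsub : HasDerivAt (fun β => (β - a) * log (β - a)) (log (β - a) + 1) β :=
    HasDerivAt.comp_sub_const β a (hasDerivAt_mul_log (sub_ne_zero.2 hβa))
  exact ((hsub.const_add (a * log a)).sub (hasDerivAt_mul_log hβ0)).congr_deriv (by ring)

lemma deriv_logHPerspective_eventuallyEq {a β : ℝ} (hβ0 : β ≠ 0) (hβa : β ≠ a) :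
    deriv (logHPerspective a) =ᶠ[𝓝 β] fun β => log (β - a) - log β := by
  filter_upwards [eventually_ne_nhds hβ0, eventually_ne_nhds hβa] with β' h0 ha
  exact (hasDerivAt_logHPerspective h0 ha).deriv

lemma deriv_deriv_logHPerspective {a β : ℝ} (hβ0 : β ≠ 0) (hβa : β ≠ a) :
    deriv (deriv (logHPerspective a)) β = a / (β * (β - a)) := by
  have hβa' : β - a ≠ 0 := sub_ne_zero.2 hβa
  have hd : HasDerivAt (fun β => log (β - a) - log β) ((β - a)⁻¹ - β⁻¹) β :=
    (HasDerivAt.comp_sub_const β a (hasDerivAt_log hβa')).sub (hasDerivAt_log hβ0)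
  rw [(deriv_logHPerspective_eventuallyEq hβ0 hβa).deriv_eq, hd.deriv]
  field_simp
  ring

lemma convexOn_logHPerspective {a : ℝ} (ha : 0 ≤ a) : ConvexOn ℝ (Ioi a) (logHPerspective a) := by
  have hd : ∀ β ∈ Ioi a, HasDerivAt (logHPerspective a) (log (β - a) - log β) β :=
    fun β hβ => hasDerivAt_logHPerspective (ha.trans_lt hβ).ne' (ne_of_gt hβ)
  refine MonotoneOn.convexOn_of_deriv (convex_Ioi a)
    (fun β hβ => (hd β hβ).continuousAt.continuousWithinAt) ?_ ?_
  · rw [interior_Ioi]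
    exact fun β hβ => (hd β hβ).differentiableAt.differentiableWithinAt
  · rw [interior_Ioi]
    intro x hx y hy hxy
    have hx0 : 0 < x := ha.trans_lt hx
    have hy0 : 0 < y := ha.trans_lt hy
    have hxa : 0 < x - a := sub_pos.2 hx
    have hya : 0 < y - a := sub_pos.2 hy
    rw [(hd x hx).deriv, (hd y hy).deriv, ← log_div hxa.ne' hx0.ne', ← log_div hya.ne' hy0.ne']
    refine log_le_log (div_pos hxa hx0) ((div_le_div_iff₀ hx0 hy0).2 ?_)
    nlinarith

lemma logHPerspective_one_add_le {a β : ℝ} (ha0 : 0 ≤ a) (ha1 : a < 1) (hβ : 1 ≤ β) :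
    logHPerspective a 1 + (β - 1) * log (1 - a) ≤ logHPerspective a β := by
  rcases hβ.eq_or_lt with rfl | hβ
  · simp
  have hd := hasDerivAt_logHPerspective (a := a) one_ne_zero (ne_of_gt ha1)
  have hslope := (convexOn_logHPerspective ha0).le_slope_of_hasDerivAt ha1 (ha1.trans hβ) hβ hd
  rw [log_one, sub_zero, slope_def_field, le_div_iff₀ (sub_pos.2 hβ)] at hslope
  linarith

/-- With `h(x) = x^x (1-x)^{1-x}` and fixed `a ∈ (0, 1)`, the function
`β ↦ β·log h(a/β)` is convex on `(a, ∞)` with second derivative `a/(β(β-a)) > 0`, and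
consequently `h(a/β)^β ≥ h(a)(1-a)^{β-1}` for every `β ≥ 1`. -/
theorem stmt_19 (a : ℝ) (ha0 : 0 < a) (ha1 : a < 1) (h : ℝ → ℝ)
    (hh : ∀ x : ℝ, h x = x ^ x * (1 - x) ^ (1 - x)) :
    ConvexOn ℝ (Set.Ioi a) (fun β => β * Real.log (h (a / β))) ∧
    (∀ β > a, deriv (deriv (fun β => β * Real.log (h (a / β)))) β = a / (β * (β - a)) ∧
      0 < a / (β * (β - a))) ∧
    (∀ β ≥ (1 : ℝ), h a * (1 - a) ^ (β - 1) ≤ h (a / β) ^ β) := by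
  obtain rfl : h = fun x => x ^ x * (1 - x) ^ (1 - x) := funext hh
  have hEq : EqOn (fun β => β * log ((a / β) ^ (a / β) * (1 - a / β) ^ (1 - a / β)))
      (logHPerspective a) (Ioi a) := fun β hβ => mul_log_rpow_div_eq_logHPerspective ha0 hβ
  refine ⟨(convexOn_logHPerspective ha0.le).congr hEq.symm, fun β hβ => ?_, fun β hβ => ?_⟩
  · have hβ0 : 0 < β := ha0.trans hβ
    rw [(hEq.eventuallyEq_of_mem (isOpen_Ioi.mem_nhds hβ)).deriv.deriv_eq,
      deriv_deriv_logHPerspective hβ0.ne' hβ.ne']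
    exact ⟨rfl, div_pos ha0 (mul_pos hβ0 (sub_pos.2 hβ))⟩
  · have hβa : a < β := ha1.trans_le hβ
    have h1a : 0 < 1 - a := sub_pos.2 ha1
    have hha : 0 < a ^ a * (1 - a) ^ (1 - a) := by positivity
    have hhβ : 0 < (a / β) ^ (a / β) * (1 - a / β) ^ (1 - a / β) := by
      have : 0 < 1 - a / β := sub_pos.2 ((div_lt_one (ha0.trans hβa)).2 hβa)
      positivity
    rw [← log_le_log_iff (by positivity) (by positivity), log_mul hha.ne' (by positivity),
      log_rpow h1a, log_rpow hhβ, mul_log_rpow_div_eq_logHPerspective ha0 hβa,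
      log_rpow_self_mul_rpow_one_sub ha0 ha1]
    simpa [logHPerspective] using logHPerspective_one_add_le ha0.le ha1 hβ
end
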